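/- Let σ₁, σ₂ > 0, μ > 0, I₃ = σ₁σ₂. With H as in the neo-Hookean membrane Hessian, the matrix (1/√2)U[[0,−1],[1,0],[0,0]]Vᵀ is an eigenmatrix with eigenvalue μ − μ/I₃³, and (1/√2)U[[0,1],[1,0],[0,0]]Vᵀ is an eigenmatrix with eigenvalue μ + μ/I₃³. -/
import Mathlib
open Matrix

/-- Frobenius inner product. -/
def frob (A B : Matrix (Fin 3) (Fin 2) ℝ) : ℝ := Matrix.trace (Aᵀ * B)

/-- Hessian of I₃ in the SVD frame, as a map on 3×2 matrices. -/
noncomputable def H3 (U : Matrix (Fin 3) (Fin 3) ℝ) (V : Matrix (Fin 2) (Fin 2) ℝ)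
    (σ₁ σ₂ : ℝ) (A : Matrix (Fin 3) (Fin 2) ℝ) : Matrix (Fin 3) (Fin 2) ℝ :=
  let M := Uᵀ * A * V
  U * !![M 1 1, -M 1 0; -M 0 1, M 0 0;
         (σ₂ / σ₁) * M 2 0, (σ₁ / σ₂) * M 2 1] * Vᵀ

/-- Hessian of the incompressible neo-Hookean membrane energy in the SVD frame. -/
noncomputable def Hneo (U : Matrix (Fin 3) (Fin 3) ℝ) (V : Matrix (Fin 2) (Fin 2) ℝ)
    (σ₁ σ₂ μ : ℝ) (A : Matrix (Fin 3) (Fin 2) ℝ) : Matrix (Fin 3) (Fin 2) ℝ :=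
  let G : Matrix (Fin 3) (Fin 2) ℝ := U * !![σ₂, 0; 0, σ₁; 0, 0] * Vᵀ
  μ • A + (3 * μ * (σ₁ * σ₂)⁻¹ ^ 4 * frob G A) • G - (μ * (σ₁ * σ₂)⁻¹ ^ 3) • H3 U V σ₁ σ₂ A

lemma sandwich (U : Matrix (Fin 3) (Fin 3) ℝ) (V : Matrix (Fin 2) (Fin 2) ℝ)
    (hU : Uᵀ * U = 1) (hV : Vᵀ * V = 1) (B : Matrix (Fin 3) (Fin 2) ℝ) :
    Uᵀ * (U * B * Vᵀ) * V = B := by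
  have : Uᵀ * (U * B * Vᵀ) * V = (Uᵀ * U) * B * (Vᵀ * V) := by
    simp [Matrix.mul_assoc]
  rw [this, hU, hV, Matrix.one_mul, Matrix.mul_one]

lemma frob_sandwich (U : Matrix (Fin 3) (Fin 3) ℝ) (V : Matrix (Fin 2) (Fin 2) ℝ)
    (hU : Uᵀ * U = 1) (hV : Vᵀ * V = 1) (S B : Matrix (Fin 3) (Fin 2) ℝ) :
    frob (U * S * Vᵀ) (U * B * Vᵀ) = Matrix.trace (Sᵀ * B) := by
  unfold frob
  have h1 : (U * S * Vᵀ)ᵀ * (U * B * Vᵀ) = V * (Sᵀ * B) * Vᵀ := by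
    have : (U * S * Vᵀ)ᵀ * (U * B * Vᵀ) = V * (Sᵀ * ((Uᵀ * U) * B)) * Vᵀ := by
      simp [Matrix.transpose_mul, Matrix.mul_assoc]
    rw [this, hU, Matrix.one_mul]
  rw [h1, Matrix.trace_mul_comm, ← Matrix.mul_assoc, hV, Matrix.one_mul]

/-- General eigen-computation for an antidiagonal shear mode. -/
lemma eig_aux (U : Matrix (Fin 3) (Fin 3) ℝ) (V : Matrix (Fin 2) (Fin 2) ℝ)
    (hU : Uᵀ * U = 1) (hV : Vᵀ * V = 1) (σ₁ σ₂ μ : ℝ)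
    (a b : ℝ) (c : ℝ) :
    Hneo U V σ₁ σ₂ μ (c • (U * !![(0:ℝ), a; b, 0; 0, 0] * Vᵀ))
      = (μ • (c • (U * !![(0:ℝ), a; b, 0; 0, 0] * Vᵀ)))
        - (μ * (σ₁ * σ₂)⁻¹ ^ 3) • (c • (U * !![(0:ℝ), -b; -a, 0; 0, 0] * Vᵀ)) := by
  set B : Matrix (Fin 3) (Fin 2) ℝ := !![(0:ℝ), a; b, 0; 0, 0] with hB
  have hM : Uᵀ * (c • (U * B * Vᵀ)) * V = c • B := by
    rw [Matrix.mul_smul, Matrix.smul_mul, sandwich U V hU hV]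
  have hfrob : frob (U * !![σ₂, 0; 0, σ₁; 0, 0] * Vᵀ) (c • (U * B * Vᵀ)) = 0 := by
    unfold frob
    rw [Matrix.mul_smul, Matrix.trace_smul]
    have := frob_sandwich U V hU hV !![σ₂, 0; 0, σ₁; 0, 0] B
    unfold frob at this
    rw [this, hB]
    simp [Matrix.trace_fin_two, Matrix.mul_apply, Fin.sum_univ_succ]
  have hH3 : H3 U V σ₁ σ₂ (c • (U * B * Vᵀ))
      = c • (U * !![(0:ℝ), -b; -a, 0; 0, 0] * Vᵀ) := by
    simp only [H3]
    rw [hM]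
    have hent : !![(c • B) 1 1, -(c • B) 1 0; -(c • B) 0 1, (c • B) 0 0;
          (σ₂ / σ₁) * (c • B) 2 0, (σ₁ / σ₂) * (c • B) 2 1]
        = c • !![(0:ℝ), -b; -a, 0; 0, 0] := by
      ext i j
      fin_cases i <;> fin_cases j <;>
        simp [hB, Matrix.smul_apply, Matrix.vecHead, Matrix.vecTail]
    rw [hent, Matrix.mul_smul, Matrix.smul_mul]
  simp only [Hneo]
  rw [hfrob, hH3, mul_zero, zero_smul, add_zero]

theorem neo_hookean_shear_eigenpairs (U : Matrix (Fin 3) (Fin 3) ℝ)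
    (V : Matrix (Fin 2) (Fin 2) ℝ) (hU : Uᵀ * U = 1) (hV : Vᵀ * V = 1)
    (σ₁ σ₂ μ : ℝ) (hσ₁ : 0 < σ₁) (hσ₂ : 0 < σ₂) (hμ : 0 < μ) :
    Hneo U V σ₁ σ₂ μ ((1 / Real.sqrt 2) • (U * !![(0:ℝ), -1; 1, 0; 0, 0] * Vᵀ))
        = (μ - μ / (σ₁ * σ₂) ^ 3) • ((1 / Real.sqrt 2) • (U * !![(0:ℝ), -1; 1, 0; 0, 0] * Vᵀ))
      ∧ Hneo U V σ₁ σ₂ μ ((1 / Real.sqrt 2) • (U * !![(0:ℝ), 1; 1, 0; 0, 0] * Vᵀ))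
        = (μ + μ / (σ₁ * σ₂) ^ 3) • ((1 / Real.sqrt 2) • (U * !![(0:ℝ), 1; 1, 0; 0, 0] * Vᵀ)) := by
  have hk : μ * (σ₁ * σ₂)⁻¹ ^ 3 = μ / (σ₁ * σ₂) ^ 3 := by
    rw [inv_pow, div_eq_mul_inv]
  constructor
  · have h := eig_aux U V hU hV σ₁ σ₂ μ (-1) 1 (1 / Real.sqrt 2)
    have e : !![(0:ℝ), -(1:ℝ); -(-1:ℝ), 0; 0, 0] = !![(0:ℝ), -1; 1, 0; 0, 0] := by norm_num
    rw [e] at h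
    rw [h, ← sub_smul, hk]
  · have h := eig_aux U V hU hV σ₁ σ₂ μ 1 1 (1 / Real.sqrt 2)
    have hneg : !![(0:ℝ), -1; -1, 0; 0, 0] = -(!![(0:ℝ), 1; 1, 0; 0, 0]) := by
      ext i j; fin_cases i <;> fin_cases j <;> simp [Matrix.vecHead, Matrix.vecTail]
    rw [hneg, Matrix.mul_neg, Matrix.neg_mul, smul_neg, smul_neg, sub_neg_eq_add,
      ← add_smul, hk] at h
    exact h
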